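/- Let m ≥ 1 be an integer, set n = 3m, and let t₁, t₂ be real numbers with t₁ ≥ n² and t₂ ≥ n². Consider the n-point set P = {(0,ν) : ν = 1,…,m} ∪ {(t₁,ν) : ν = 1,…,m} ∪ {(t₁+t₂,ν) : ν = 1,…,m} ⊂ ℝ². Then P is separated, and the number of unordered pairs {p,q} of distinct points of P whose Euclidean distance lies in [t₁, t₁+1] ∪ [t₂, t₂+1] ∪ [t₁+t₂, t₁+t₂+1] is at least 3m² = ⌊n²/3⌋. (In particular, if one of the numbers t₁, t₂, t₃ equals the sum of the other two, a separated n-point set can realize ⌊n²/3⌋ pairs with nearly equal distances among t₁, t₂, t₃.) -/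

import Mathlib

/-!
Put a column of `m` points at heights `1, …, m` above each of `x = 0, t₁, t₁ + t₂`. Two points of
one column are at vertical distance at least `1`; two points of different columns are at
horizontal distance at least `m² ≥ 1`. If two columns are at horizontal distance `d ≥ m²`, the
vertical offset `k` of any cross pair satisfies `k² < m² ≤ 2d + 1`, so its distance
`√(d² + k²)` lies in `[d, d + 1]`. The three pairs of columns have horizontal distances
`t₁`, `t₂` and `t₁ + t₂`, and each contributes `m²` pairs.
-/

/-- The number of unordered pairs `{p, q}` of distinct points of the finite set `P ⊂ ℝ²`
whose Euclidean distance lies in the set `S ⊆ ℝ`. -/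
noncomputable def nearPairs (P : Finset (EuclideanSpace ℝ (Fin 2))) (S : Set ℝ) : ℕ :=
  Set.ncard {e : Sym2 (EuclideanSpace ℝ (Fin 2)) |
    ¬ e.IsDiag ∧ (∀ p ∈ e, p ∈ P) ∧
      Sym2.lift ⟨fun p q => dist p q, fun _ _ => dist_comm _ _⟩ e ∈ S}

open scoped Classical

/-- The point `(x, y) ∈ ℝ²` as an element of `EuclideanSpace ℝ (Fin 2)`. -/
noncomputable def pt (x y : ℝ) : EuclideanSpace ℝ (Fin 2) :=
  (WithLp.equiv 2 (Fin 2 → ℝ)).symm ![x, y]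

open Finset

notation "ℝ²" => EuclideanSpace ℝ (Fin 2)

section CrossPairs

variable {α : Type*} [DecidableEq α] {A B C D : Finset α} {e : Sym2 α}

def crossPairs (A B : Finset α) : Finset (Sym2 α) := (A ×ˢ B).image fun ab => s(ab.1, ab.2)

lemma mem_crossPairs : e ∈ crossPairs A B ↔ ∃ a ∈ A, ∃ b ∈ B, s(a, b) = e := by
  simp [crossPairs, and_assoc]

lemma crossPairs_subset_sym2 : crossPairs A B ⊆ (A ∪ B).sym2 := by
  intro e he
  obtain ⟨a, ha, b, hb, rfl⟩ := mem_crossPairs.1 he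
  simp [ha, hb]

lemma not_isDiag_of_mem_crossPairs (h : Disjoint A B) (he : e ∈ crossPairs A B) :
    ¬ e.IsDiag := by
  obtain ⟨a, ha, b, hb, rfl⟩ := mem_crossPairs.1 he
  rw [Sym2.mk_isDiag_iff]
  rintro rfl
  exact disjoint_left.1 h ha hb

lemma card_crossPairs (h : Disjoint A B) : #(crossPairs A B) = #A * #B := by
  rw [crossPairs, card_image_of_injOn, card_product]
  rintro ⟨a, b⟩ hab ⟨a', b'⟩ hab' heq
  simp only [coe_product, Set.mem_prod, mem_coe] at hab hab'
  rcases Sym2.eq_iff.1 heq with ⟨rfl, rfl⟩ | ⟨rfl, rfl⟩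
  · rfl
  · exact (disjoint_left.1 h hab.1 hab'.2).elim

lemma disjoint_crossPairs (h : Disjoint A (C ∪ D)) :
    Disjoint (crossPairs A B) (crossPairs C D) := by
  refine disjoint_left.2 fun e he he' => ?_
  obtain ⟨a, ha, b, -, rfl⟩ := mem_crossPairs.1 he
  exact disjoint_left.1 h ha
    (mem_sym2_iff.1 (crossPairs_subset_sym2 he') a (Sym2.mem_mk_left a b))

end CrossPairs

def IsNearPair (P : Finset ℝ²) (S : Set ℝ) (e : Sym2 ℝ²) : Prop :=
  ¬ e.IsDiag ∧ (∀ p ∈ e, p ∈ P) ∧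
    Sym2.lift ⟨fun p q => dist p q, fun _ _ => dist_comm _ _⟩ e ∈ S

lemma IsNearPair.mono {P P' : Finset ℝ²} {S S' : Set ℝ} {e : Sym2 ℝ²} (h : IsNearPair P S e)
    (hP : P ⊆ P') (hS : S ⊆ S') : IsNearPair P' S' e :=
  ⟨h.1, fun p hp => hP (h.2.1 p hp), hS h.2.2⟩

lemma card_le_nearPairs {P : Finset ℝ²} {S : Set ℝ} (s : Finset (Sym2 ℝ²))
    (hs : ∀ e ∈ s, IsNearPair P S e) : #s ≤ nearPairs P S := by
  rw [← Set.ncard_coe_finset]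
  refine Set.ncard_le_ncard (fun e he => hs e he) ((P.sym2.finite_toSet).subset ?_)
  exact fun e he => mem_sym2_iff.2 he.2.1

lemma dist_pt (a b c d : ℝ) : dist (pt a b) (pt c d) = √((a - c) ^ 2 + (b - d) ^ 2) := by
  simp [EuclideanSpace.dist_eq, pt, Fin.sum_univ_two, Real.dist_eq, sq_abs]

lemma pt_inj {a b c d : ℝ} : pt a b = pt c d ↔ a = c ∧ b = d := by
  refine ⟨fun h => ⟨by simpa [pt] using congrArg (· 0) h,
    by simpa [pt] using congrArg (· 1) h⟩, ?_⟩
  rintro ⟨rfl, rfl⟩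
  rfl

lemma abs_fst_sub_le_dist_pt (a b c d : ℝ) : |a - c| ≤ dist (pt a b) (pt c d) := by
  rw [dist_pt, ← Real.sqrt_sq_eq_abs]
  exact Real.sqrt_le_sqrt (le_add_of_nonneg_right (sq_nonneg _))

lemma abs_snd_sub_le_dist_pt (a b c d : ℝ) : |b - d| ≤ dist (pt a b) (pt c d) := by
  rw [dist_pt, ← Real.sqrt_sq_eq_abs]
  exact Real.sqrt_le_sqrt (le_add_of_nonneg_left (sq_nonneg _))

lemma dist_pt_le {a b c d : ℝ} (h : (b - d) ^ 2 ≤ 2 * |a - c| + 1) :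
    dist (pt a b) (pt c d) ≤ |a - c| + 1 := by
  rw [dist_pt, Real.sqrt_le_left (by positivity), ← sq_abs (a - c)]
  nlinarith

noncomputable def column (x : ℝ) (m : ℕ) : Finset ℝ² := (Icc 1 m).image fun ν : ℕ => pt x ν

section Column

variable {a b : ℝ} {m : ℕ} {p q : ℝ²}

lemma mem_column : p ∈ column a m ↔ ∃ ν ∈ Icc 1 m, pt a ν = p := mem_image

lemma card_column : #(column a m) = m := by
  rw [column, card_image_of_injective, Nat.card_Icc, Nat.add_sub_cancel]
  exact fun ν μ h => Nat.cast_injective (pt_inj.1 h).2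

lemma one_le_of_mem_column (hp : p ∈ column a m) : (1 : ℝ) ≤ m := by
  obtain ⟨ν, hν, -⟩ := mem_column.1 hp
  exact_mod_cast (mem_Icc.1 hν).1.trans (mem_Icc.1 hν).2

lemma disjoint_column (h : (m : ℝ) ^ 2 ≤ |a - b|) : Disjoint (column a m) (column b m) := by
  refine disjoint_left.2 fun p hpa hpb => ?_
  obtain ⟨ν, -, rfl⟩ := mem_column.1 hpa
  obtain ⟨μ, -, hμ⟩ := mem_column.1 hpb
  rw [(pt_inj.1 hμ).1, sub_self, abs_zero] at h
  nlinarith [one_le_of_mem_column hpa]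

lemma dist_mem_Icc_of_mem_column (hp : p ∈ column a m) (hq : q ∈ column b m)
    (h : (m : ℝ) ^ 2 ≤ |a - b|) : dist p q ∈ Set.Icc |a - b| (|a - b| + 1) := by
  obtain ⟨ν, hν, rfl⟩ := mem_column.1 hp
  obtain ⟨μ, hμ, rfl⟩ := mem_column.1 hq
  obtain ⟨hν₁, hνm⟩ : (1 : ℝ) ≤ ν ∧ (ν : ℝ) ≤ m := by exact_mod_cast mem_Icc.1 hν
  obtain ⟨hμ₁, hμm⟩ : (1 : ℝ) ≤ μ ∧ (μ : ℝ) ≤ m := by exact_mod_cast mem_Icc.1 hμ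
  have hνμ : ((ν : ℝ) - μ) ^ 2 ≤ (m : ℝ) ^ 2 := by
    rw [sq_le_sq, Nat.abs_cast, abs_le]
    constructor <;> linarith
  exact ⟨abs_fst_sub_le_dist_pt _ _ _ _, dist_pt_le (by linarith [abs_nonneg (a - b)])⟩

lemma one_le_dist_of_mem_column (hp : p ∈ column a m) (hq : q ∈ column b m)
    (h : a = b ∨ (m : ℝ) ^ 2 ≤ |a - b|) (hpq : p ≠ q) : 1 ≤ dist p q := by
  obtain ⟨ν, -, rfl⟩ := mem_column.1 hp
  obtain ⟨μ, -, rfl⟩ := mem_column.1 hq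
  rcases h with rfl | h
  · have hνμ : ν ≠ μ := by rintro rfl; exact hpq rfl
    have hvert : (1 : ℝ) ≤ |(ν : ℝ) - μ| := by
      exact_mod_cast Int.one_le_abs (sub_ne_zero.2 (Nat.cast_injective.ne hνμ))
    exact hvert.trans (abs_snd_sub_le_dist_pt _ _ _ _)
  · calc (1 : ℝ) ≤ (m : ℝ) ^ 2 := one_le_pow₀ (one_le_of_mem_column hp)
      _ ≤ |a - b| := h
      _ ≤ _ := abs_fst_sub_le_dist_pt _ _ _ _

lemma isNearPair_of_mem_crossPairs_column {e : Sym2 ℝ²}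
    (he : e ∈ crossPairs (column a m) (column b m)) (h : (m : ℝ) ^ 2 ≤ |a - b|) :
    IsNearPair (column a m ∪ column b m) (Set.Icc |a - b| (|a - b| + 1)) e := by
  refine ⟨not_isDiag_of_mem_crossPairs (disjoint_column h) he,
    mem_sym2_iff.1 (crossPairs_subset_sym2 he), ?_⟩
  obtain ⟨p, hp, q, hq, rfl⟩ := mem_crossPairs.1 he
  exact dist_mem_Icc_of_mem_column hp hq h

end Column

noncomputable def threeColumns (m : ℕ) (t₁ t₂ : ℝ) : Finset ℝ² :=
  column 0 m ∪ column t₁ m ∪ column (t₁ + t₂) m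

section ThreeColumns

variable {m : ℕ} {t₁ t₂ : ℝ}

lemma one_le_dist_of_mem_threeColumns (h₁ : (m : ℝ) ^ 2 ≤ t₁) (h₂ : (m : ℝ) ^ 2 ≤ t₂) :
    ∀ p ∈ threeColumns m t₁ t₂, ∀ q ∈ threeColumns m t₁ t₂, p ≠ q → 1 ≤ dist p q := by
  intro p hp q hq hpq
  have hm := sq_nonneg (m : ℝ)
  simp only [threeColumns, mem_union] at hp hq
  rcases hp with (hp | hp) | hp <;> rcases hq with (hq | hq) | hq <;>
    refine one_le_dist_of_mem_column hp hq ?_ hpq <;>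
    first
      | exact .inl rfl
      | exact .inr (le_abs.2 (.inl (by linarith)))
      | exact .inr (le_abs.2 (.inr (by linarith)))

lemma three_mul_sq_le_nearPairs_threeColumns (h₁ : (m : ℝ) ^ 2 ≤ t₁) (h₂ : (m : ℝ) ^ 2 ≤ t₂) :
    3 * m ^ 2 ≤ nearPairs (threeColumns m t₁ t₂)
      (Set.Icc t₁ (t₁ + 1) ∪ Set.Icc t₂ (t₂ + 1) ∪ Set.Icc (t₁ + t₂) (t₁ + t₂ + 1)) := by
  have hm := sq_nonneg (m : ℝ)
  have e₀₁ : |0 - t₁| = t₁ := by rw [zero_sub, abs_neg, abs_of_nonneg (by linarith)]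
  have e₁₂ : |t₁ - (t₁ + t₂)| = t₂ := by
    rw [sub_add_cancel_left, abs_neg, abs_of_nonneg (by linarith)]
  have e₂₀ : |t₁ + t₂ - 0| = t₁ + t₂ := by rw [sub_zero, abs_of_nonneg (by linarith)]
  have g₀₁ : (m : ℝ) ^ 2 ≤ |0 - t₁| := by rw [e₀₁]; exact h₁
  have g₁₂ : (m : ℝ) ^ 2 ≤ |t₁ - (t₁ + t₂)| := by rw [e₁₂]; exact h₂
  have g₂₀ : (m : ℝ) ^ 2 ≤ |t₁ + t₂ - 0| := by rw [e₂₀]; linarith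
  set C₀ := column 0 m
  set C₁ := column t₁ m
  set C₂ := column (t₁ + t₂) m
  -- Ordering the third family as `(C₂, C₀)` makes the first column of each family disjoint
  -- from both columns of every other family.
  have hcard : #(crossPairs C₀ C₁ ∪ crossPairs C₁ C₂ ∪ crossPairs C₂ C₀) = 3 * m ^ 2 := by
    rw [card_union_of_disjoint, card_union_of_disjoint, card_crossPairs (disjoint_column g₀₁),
      card_crossPairs (disjoint_column g₁₂), card_crossPairs (disjoint_column g₂₀),
      card_column, card_column, card_column]
    · ring
    · exact disjoint_crossPairs
        (disjoint_union_right.2 ⟨disjoint_column g₀₁, (disjoint_column g₂₀).symm⟩)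
    · exact disjoint_union_left.2
        ⟨(disjoint_crossPairs
            (disjoint_union_right.2 ⟨disjoint_column g₂₀, (disjoint_column g₁₂).symm⟩)).symm,
          disjoint_crossPairs
            (disjoint_union_right.2 ⟨disjoint_column g₁₂, (disjoint_column g₀₁).symm⟩)⟩
  rw [← hcard]
  refine card_le_nearPairs _ fun e he => ?_
  rcases mem_union.1 he with he | he
  · rcases mem_union.1 he with he | he
    · refine (isNearPair_of_mem_crossPairs_column he g₀₁).mono subset_union_left ?_
      rw [e₀₁]
      exact Set.subset_union_left.trans Set.subset_union_left
    · refine (isNearPair_of_mem_crossPairs_column he g₁₂).mono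
        (union_subset_union subset_union_right le_rfl) ?_
      rw [e₁₂]
      exact Set.subset_union_right.trans Set.subset_union_left
  · refine (isNearPair_of_mem_crossPairs_column he g₂₀).mono
      (union_subset subset_union_right (subset_union_left.trans subset_union_left)) ?_
    rw [e₂₀]
    exact Set.subset_union_right

end ThreeColumns

theorem three_columns_example_general (m : ℕ) (n : ℕ) (hn : n = 3 * m)
    (t₁ t₂ : ℝ) (ht₁ : (n : ℝ)^2 ≤ t₁) (ht₂ : (n : ℝ)^2 ≤ t₂)
    (P : Finset (EuclideanSpace ℝ (Fin 2)))
    (hP : P = ((Finset.Icc 1 m).image fun ν : ℕ => pt 0 (ν : ℝ)) ∪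
              ((Finset.Icc 1 m).image fun ν : ℕ => pt t₁ (ν : ℝ)) ∪
              ((Finset.Icc 1 m).image fun ν : ℕ => pt (t₁ + t₂) (ν : ℝ))) :
    (∀ p ∈ P, ∀ q ∈ P, p ≠ q → 1 ≤ dist p q) ∧
    3 * m ^ 2 ≤ nearPairs P
      (Set.Icc t₁ (t₁ + 1) ∪ Set.Icc t₂ (t₂ + 1) ∪ Set.Icc (t₁ + t₂) (t₁ + t₂ + 1)) ∧
    3 * m ^ 2 = n ^ 2 / 3 := by
  subst hn
  replace hP : P = threeColumns m t₁ t₂ := hP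
  subst hP
  push_cast at ht₁ ht₂
  have h₁ : (m : ℝ) ^ 2 ≤ t₁ := by nlinarith
  have h₂ : (m : ℝ) ^ 2 ≤ t₂ := by nlinarith
  refine ⟨one_le_dist_of_mem_threeColumns h₁ h₂,
    three_mul_sq_le_nearPairs_threeColumns h₁ h₂, ?_⟩
  rw [show (3 * m) ^ 2 = 3 * (3 * m ^ 2) by ring, Nat.mul_div_cancel_left _ three_pos]

theorem three_columns_example (m : ℕ) (hm : 1 ≤ m) (n : ℕ) (hn : n = 3 * m)
    (t₁ t₂ : ℝ) (ht₁ : (n : ℝ)^2 ≤ t₁) (ht₂ : (n : ℝ)^2 ≤ t₂)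
    (P : Finset (EuclideanSpace ℝ (Fin 2)))
    (hP : P = ((Finset.Icc 1 m).image fun ν : ℕ => pt 0 (ν : ℝ)) ∪
              ((Finset.Icc 1 m).image fun ν : ℕ => pt t₁ (ν : ℝ)) ∪
              ((Finset.Icc 1 m).image fun ν : ℕ => pt (t₁ + t₂) (ν : ℝ))) :
    (∀ p ∈ P, ∀ q ∈ P, p ≠ q → 1 ≤ dist p q) ∧
    3 * m ^ 2 ≤ nearPairs P
      (Set.Icc t₁ (t₁ + 1) ∪ Set.Icc t₂ (t₂ + 1) ∪ Set.Icc (t₁ + t₂) (t₁ + t₂ + 1)) ∧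
    3 * m ^ 2 = n ^ 2 / 3 :=
  three_columns_example_general m n hn t₁ t₂ ht₁ ht₂ P hP
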